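/- arXiv:1901.05246 — 4 statements merged into one kernel-verified Lean document; each statement's English description precedes it below -/
import Mathlib

section
/- Let ψ : [0,∞) → [0,∞) be an increasing concave function with ψ(0) = 0 and ψ(t) → ∞ as t → ∞, satisfying condition (2.1) (hence of regular variation of index 0). Let H : (0,∞) → [0,∞) be nonincreasing with c_H := sup_{t>2} (1/ψ(t)) ∫_0^t H(s) ds < ∞. Then for every α > 1 there exists t₀ > 0 such that for all t ≥ t₀ the Lebesgue measure of the set {s ∈ (0,∞) : H(s) > 1/t} is at most t^α. -/
/-!
If `{H > 1/t}` had measure larger than `t ^ α`, then, `H` being nonincreasing, `H > 1/t` on all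
of `(0, t ^ α]`, so `∫₀^{t^α} H ≥ t ^ (α - 1)`. But this integral is at most `M ψ (t ^ α)`, and `ψ`
grows slower than every power: concavity gives `ψ t = O(t)`, condition (2.1) gives
`ψ (t ^ β) = O(ψ t)`, so `ψ s = O(s ^ (1/β))` for every `β > 1`. Hence `M ψ (t ^ α) = o(t ^ (α - 1))`.
-/

open MeasureTheory Filter Set Topology Asymptotics

theorem ConcaveOn.le_mul_of_one_le {ψ : ℝ → ℝ} (hconc : ConcaveOn ℝ (Ici 0) ψ) (h0 : ψ 0 = 0)
    {u : ℝ} (hu : 1 ≤ u) : ψ u ≤ ψ 1 * u := by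
  have hslope := hconc.slope_anti self_mem_Ici (a := 1) (b := u)
    ⟨mem_Ici.2 zero_le_one, one_ne_zero⟩
    ⟨mem_Ici.2 (zero_le_one.trans hu), (zero_lt_one.trans_le hu).ne'⟩ hu
  simp only [slope_def_field, h0, sub_zero, div_one] at hslope
  rwa [div_le_iff₀ (zero_lt_one.trans_le hu)] at hslope

theorem ConcaveOn.isBigO_id_atTop {ψ : ℝ → ℝ} (hconc : ConcaveOn ℝ (Ici 0) ψ) (h0 : ψ 0 = 0)
    (hnonneg : ∀ᶠ u in atTop, 0 ≤ ψ u) : ψ =O[atTop] id := by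
  refine IsBigO.of_bound (ψ 1) ?_
  filter_upwards [hnonneg, eventually_ge_atTop 1] with u hψu hu
  rw [Real.norm_of_nonneg hψu, id, Real.norm_of_nonneg (zero_le_one.trans hu)]
  exact hconc.le_mul_of_one_le h0 hu

theorem isLittleO_rpow_rpow_atTop {a b : ℝ} (hab : a < b) :
    (fun x : ℝ => x ^ a) =o[atTop] fun x => x ^ b := by
  refine (isLittleO_iff_tendsto' ?_).2 ?_
  · filter_upwards [eventually_gt_atTop 0] with x hx h
    exact absurd h (Real.rpow_pos_of_pos hx b).ne'
  · refine (tendsto_rpow_neg_atTop (sub_pos.2 hab)).congr' ?_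
    filter_upwards [eventually_gt_atTop 0] with x hx
    rw [← Real.rpow_sub hx, neg_sub]

theorem isBigO_rpow_inv_of_isBigO_comp_rpow {E : Type*} [Norm E] {f : ℝ → E} {β : ℝ}
    (hβ : 0 < β) (h : (fun t => f (t ^ β)) =O[atTop] id) :
    f =O[atTop] fun s => s ^ β⁻¹ := by
  refine (h.comp_tendsto (tendsto_rpow_atTop (inv_pos.2 hβ))).congr' ?_ .rfl
  filter_upwards [eventually_ge_atTop 0] with s hs
  simp only [Function.comp_apply, Real.rpow_inv_rpow hs hβ.ne']

theorem ConcaveOn.isLittleO_rpow_atTop {ψ : ℝ → ℝ} (hconc : ConcaveOn ℝ (Ici 0) ψ)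
    (h0 : ψ 0 = 0) (htop : Tendsto ψ atTop atTop)
    (hratio : ∀ β : ℝ, 1 < β → ∃ A : ℝ, Tendsto (fun t => ψ (t ^ β) / ψ t) atTop (𝓝 A))
    {p : ℝ} (hp : 0 < p) : ψ =o[atTop] fun s => s ^ p := by
  set β := (p + 1) / p
  have hβ : 1 < β := by rw [one_lt_div hp]; linarith
  have hβp : β⁻¹ < p := by
    rw [inv_div, div_lt_iff₀ (by linarith)]; nlinarith
  obtain ⟨A, hA⟩ := hratio β hβ
  have hcomp : (fun t => ψ (t ^ β)) =O[atTop] ψ :=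
    isBigO_of_div_tendsto_nhds
      ((htop.eventually_gt_atTop 0).mono fun t ht h => absurd h ht.ne') A hA
  have hlin := hconc.isBigO_id_atTop h0 (htop.eventually_ge_atTop 0)
  exact (isBigO_rpow_inv_of_isBigO_comp_rpow (by linarith) (hcomp.trans hlin)).trans_isLittleO
    (isLittleO_rpow_rpow_atTop hβp)

theorem AntitoneOn.volume_setOf_lt_le {H : ℝ → ℝ} (hH : AntitoneOn H (Ioi 0)) {c a : ℝ}
    (hc : 0 ≤ c) (h : ∫⁻ s in Ioc 0 a, ENNReal.ofReal (H s) < ENNReal.ofReal (c * a)) :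
    volume {s | 0 < s ∧ c < H s} ≤ ENNReal.ofReal a := by
  by_cases hsub : {s | 0 < s ∧ c < H s} ⊆ Ioo 0 a
  · simpa using measure_mono (μ := volume) hsub
  exfalso
  obtain ⟨s₀, ⟨hs₀, hcs₀⟩, hs₀a⟩ := not_subset.1 hsub
  have has₀ : a ≤ s₀ := not_lt.1 fun h => hs₀a ⟨hs₀, h⟩
  have hlower : ∫⁻ _ in Ioc 0 a, ENNReal.ofReal c ≤ ∫⁻ s in Ioc 0 a, ENNReal.ofReal (H s) :=
    setLIntegral_mono' measurableSet_Ioc fun x hx =>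
      ENNReal.ofReal_le_ofReal (hcs₀.trans_le (hH hx.1 hs₀ (hx.2.trans has₀))).le
  rw [setLIntegral_const, Real.volume_Ioc, sub_zero, ← ENNReal.ofReal_mul hc] at hlower
  exact (hlower.trans_lt h).false

theorem statement4_general
    (ψ : ℝ → ℝ)
    (hψ_conc : ConcaveOn ℝ (Set.Ici 0) ψ)
    (hψ_zero : ψ 0 = 0)
    (hψ_top : Tendsto ψ atTop atTop)
    (h21 : ∀ α : ℝ, 1 < α →
      ∃ A : ℝ, Tendsto (fun t : ℝ => ψ (t ^ α) / ψ t) atTop (𝓝 A))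
    (H : ℝ → ℝ)
    (hH_anti : AntitoneOn H (Set.Ioi 0))
    (hcH : ∃ M : ℝ, ∀ t : ℝ, 2 < t →
      (∫⁻ s in Set.Ioc (0:ℝ) t, ENNReal.ofReal (H s)) ≤ ENNReal.ofReal (M * ψ t)) :
    ∀ α : ℝ, 1 < α → ∃ t₀ > (0:ℝ), ∀ t : ℝ, t₀ ≤ t →
      volume {s : ℝ | 0 < s ∧ 1/t < H s} ≤ ENNReal.ofReal (t ^ α) := by
  intro α hα
  obtain ⟨M, hM⟩ := hcH
  have hα0 : 0 < α := zero_lt_one.trans hα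
  have hsmall : (fun t => M * ψ (t ^ α)) =o[atTop] fun t => t ^ (α - 1) := by
    refine ((hψ_conc.isLittleO_rpow_atTop hψ_zero hψ_top h21 (p := (α - 1) / α)
      (div_pos (sub_pos.2 hα) hα0)).comp_tendsto (tendsto_rpow_atTop hα0)).const_mul_left M
      |>.congr' .rfl ?_
    filter_upwards [eventually_ge_atTop 0] with t ht
    rw [Function.comp_apply, ← Real.rpow_mul ht, mul_div_cancel₀ _ hα0.ne']
  obtain ⟨t₀, ht₀⟩ := ((hsmall.def one_half_pos).and
    (((tendsto_rpow_atTop hα0).eventually_gt_atTop 2).and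
      (eventually_gt_atTop 0))).exists_forall_of_atTop
  refine ⟨max t₀ 1, by positivity, fun t ht => ?_⟩
  obtain ⟨hbound, ht2, ht0⟩ := ht₀ t (le_of_max_le_left ht)
  refine hH_anti.volume_setOf_lt_le (one_div_nonneg.2 ht0.le) ((hM _ ht2).trans_lt ?_)
  have hpow : 1 / t * t ^ α = t ^ (α - 1) := by
    rw [Real.rpow_sub_one ht0.ne']; ring
  rw [ENNReal.ofReal_lt_ofReal_iff (by positivity), hpow]
  have hpos := Real.rpow_pos_of_pos ht0 (α - 1)
  rw [Real.norm_of_nonneg hpos.le] at hbound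
  linarith [Real.le_norm_self (M * ψ (t ^ α))]

/-- (Proposition 2.8 (a).)  Let `ψ` be an increasing concave
function with `ψ 0 = 0`, `ψ → ∞`, satisfying condition (2.1) (hence slowly
varying).  Let `H : (0,∞) → [0,∞)` be nonincreasing with
`c_H := sup_{t>2} (1/ψ t) ∫₀ᵗ H < ∞`.  Then for every `α > 1` there is
`t₀ > 0` such that for all `t ≥ t₀` the Lebesgue measure of
`{s > 0 : H s > 1/t}` is at most `t^α`. -/
theorem statement4
    (ψ : ℝ → ℝ)
    (hψ_mono : MonotoneOn ψ (Set.Ici 0))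
    (hψ_conc : ConcaveOn ℝ (Set.Ici 0) ψ)
    (hψ_zero : ψ 0 = 0)
    (hψ_top : Tendsto ψ atTop atTop)
    (h21 : ∀ α : ℝ, 1 < α →
      ∃ A : ℝ, Tendsto (fun t : ℝ => ψ (t ^ α) / ψ t) atTop (𝓝 A))
    (H : ℝ → ℝ)
    (hH_anti : AntitoneOn H (Set.Ioi 0))
    (hH_nonneg : ∀ s, 0 ≤ H s)
    (hcH : ∃ M : ℝ, ∀ t : ℝ, 2 < t →
      (∫⁻ s in Set.Ioc (0:ℝ) t, ENNReal.ofReal (H s)) ≤ ENNReal.ofReal (M * ψ t)) :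
    ∀ α : ℝ, 1 < α → ∃ t₀ > (0:ℝ), ∀ t : ℝ, t₀ ≤ t →
      volume {s : ℝ | 0 < s ∧ 1/t < H s} ≤ ENNReal.ofReal (t ^ α) :=
  statement4_general ψ hψ_conc hψ_zero hψ_top h21 H hH_anti hcH
end

section
/- Let ψ : [0,∞) → [0,∞) be an increasing concave function with ψ(0) = 0 and ψ(t) → ∞ as t → ∞, satisfying condition (2.1). Let δ > 0 and let H : (0,∞) → [0,∞) be nonincreasing with H ∈ L^q(0,∞) for every 1 < q < 1+δ and sup_{t>2} (1/ψ(t)) ∫_0^t H(s) ds < ∞. Let D(t) denote the Lebesgue measure of {s ∈ (0,∞) : H(s) > 1/t}. Then for every exponentiation invariant extended limit ω one has ω( t ↦ (1/ψ(t)) ∫_0^t H(s) ds ) = ω( t ↦ (1/ψ(t)) ∫_0^{D(t)} H(s) ds ) (both inner functions, restricted to a neighbourhood of ∞, are bounded). -/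
/-!
Write `F t = ∫₀ᵗ H` and `D t = |{H > 1/t}|`. Beyond `D t` the integrand is at most `1/t`, so
`F t ≤ F (D t) + 1`, and `ω (F / ψ) ≤ ω (F ∘ D / ψ)` because `1/ψ → 0`. Conversely, Chebyshev's
inequality for an `L^q` bound with `q` slightly above `1` gives `D t ≤ t ^ β` eventually for every
`β > 1`, hence `F (D t) / ψ t ≤ (F (t^β) / ψ (t^β)) · (ψ (t^β) / ψ t)`. Exponentiation invariance
turns this into `ω (F ∘ D / ψ) ≤ A_ψ(β) · ω (F / ψ)`, and `A_ψ(β)` can be taken arbitrarily close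
to `1` since `A_ψ(β²) = A_ψ(β)²` and `A_ψ ≥ 1`.
-/

open MeasureTheory Filter Set Topology
open scoped ENNReal NNReal

/-- An *extended limit* (at `∞`): an `ℝ`-linear functional `ω` on the space of
all functions `(0,∞) → ℝ` (modelled as `ℝ → ℝ`) such that `ω 1 = 1`, `ω` is
monotone on functions bounded near `∞`, and `ω f = 0` whenever `f → 0` at `∞`. -/
structure ExtendedLimit where
  toFun : (ℝ → ℝ) →ₗ[ℝ] ℝ
  map_one : toFun 1 = 1
  mono : ∀ f g : ℝ → ℝ, (∀ᶠ t in atTop, f t ≤ g t) →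
    (∃ M, ∀ᶠ t in atTop, |f t| ≤ M) → (∃ M, ∀ᶠ t in atTop, |g t| ≤ M) →
    toFun f ≤ toFun g
  vanish : ∀ f : ℝ → ℝ, Tendsto f atTop (𝓝 (0:ℝ)) → toFun f = 0

/-- A function bounded on a neighbourhood of `∞`. -/
def BoundedNearInfty (f : ℝ → ℝ) : Prop := ∃ M, ∀ᶠ t in atTop, |f t| ≤ M

/-- An extended limit is *exponentiation invariant* if `ω (t ↦ f (t^α)) = ω f`
for every `α ≥ 1` and every `f` bounded near `∞`. -/
def ExpInvariant (ω : ExtendedLimit) : Prop :=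
  ∀ f : ℝ → ℝ, BoundedNearInfty f → ∀ α : ℝ, 1 ≤ α →
    ω.toFun (fun t => f (t ^ α)) = ω.toFun f

open Asymptotics

theorem boundedNearInfty_iff_isBigO_one {f : ℝ → ℝ} :
    BoundedNearInfty f ↔ f =O[atTop] (fun _ => (1 : ℝ)) := by
  simp only [isBigO_one_iff, Real.norm_eq_abs]
  rfl

theorem BoundedNearInfty.comp_rpow_mul {f r : ℝ → ℝ} {β A : ℝ} (hf : BoundedNearInfty f)
    (hβ : 0 < β) (hr : Tendsto r atTop (𝓝 A)) :
    BoundedNearInfty (fun t => f (t ^ β) * r t) := by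
  rw [boundedNearInfty_iff_isBigO_one] at hf ⊢
  simpa using (hf.comp_tendsto (tendsto_rpow_atTop hβ)).mul (hr.isBigO_one ℝ)

theorem BoundedNearInfty.of_nonneg_of_le {f g : ℝ → ℝ} (hf : BoundedNearInfty f)
    (hg₀ : ∀ᶠ t in atTop, 0 ≤ g t) (hgf : ∀ᶠ t in atTop, g t ≤ f t) : BoundedNearInfty g := by
  obtain ⟨M, hM⟩ := hf
  refine ⟨M, ?_⟩
  filter_upwards [hM, hg₀, hgf] with t hM hg₀ hgf
  exact (abs_of_nonneg hg₀).trans_le ((hgf.trans (le_abs_self _)).trans hM)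

theorem BoundedNearInfty.add_tendsto {f e : ℝ → ℝ} {c : ℝ} (hf : BoundedNearInfty f)
    (he : Tendsto e atTop (𝓝 c)) : BoundedNearInfty (f + e) := by
  rw [boundedNearInfty_iff_isBigO_one] at hf ⊢
  exact hf.add (he.isBigO_one ℝ)

namespace ExtendedLimit

theorem map_le_of_eventually_le_add (ω : ExtendedLimit) {f g e : ℝ → ℝ}
    (hf : BoundedNearInfty f) (hg : BoundedNearInfty g) (he : Tendsto e atTop (𝓝 0))
    (hfg : ∀ᶠ t in atTop, f t ≤ g t + e t) : ω.toFun f ≤ ω.toFun g := by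
  have := ω.mono f (g + e) hfg hf (hg.add_tendsto he)
  rwa [map_add, ω.vanish e he, add_zero] at this

theorem map_le_mul_of_eventually_le_comp_rpow_mul {ω : ExtendedLimit} (hω : ExpInvariant ω)
    {f g r : ℝ → ℝ} {β A : ℝ} (hβ : 1 ≤ β) (hf : BoundedNearInfty f) (hg : BoundedNearInfty g)
    (hr : Tendsto r atTop (𝓝 A)) (hgf : ∀ᶠ t in atTop, g t ≤ f (t ^ β) * r t) :
    ω.toFun g ≤ A * ω.toFun f := by
  have hβ₀ : 0 < β := one_pos.trans_le hβ
  have herr : Tendsto (fun t => f (t ^ β) * (r t - A)) atTop (𝓝 0) := by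
    rw [boundedNearInfty_iff_isBigO_one] at hf
    refine ((hf.comp_tendsto (tendsto_rpow_atTop hβ₀)).mul (isBigO_refl (fun t => r t - A) _)
      ).trans_tendsto ?_
    simpa using hr.sub_const A
  have hsplit : (fun t => f (t ^ β) * r t) =
      A • (fun t => f (t ^ β)) + fun t => f (t ^ β) * (r t - A) := by
    funext t
    simp only [Pi.add_apply, Pi.smul_apply, smul_eq_mul]
    ring
  calc ω.toFun g ≤ ω.toFun (fun t => f (t ^ β) * r t) :=
        ω.mono _ _ hgf hg (hf.comp_rpow_mul hβ₀ hr)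
    _ = A * ω.toFun f := by
        rw [hsplit, map_add, map_smul, ω.vanish _ herr, hω f hf β hβ, smul_eq_mul, add_zero]

end ExtendedLimit

section RatioLimits

variable {ψ : ℝ → ℝ}

theorem one_le_of_tendsto_rpow_div (hψ_mono : MonotoneOn ψ (Ici 0))
    (hψ_top : Tendsto ψ atTop atTop) {β A : ℝ} (hβ : 1 ≤ β)
    (hA : Tendsto (fun t => ψ (t ^ β) / ψ t) atTop (𝓝 A)) : 1 ≤ A := by
  refine ge_of_tendsto hA ?_
  filter_upwards [hψ_top.eventually_gt_atTop 0, eventually_ge_atTop 1] with t hψt ht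
  rw [le_div_iff₀ hψt, one_mul]
  exact hψ_mono (zero_le_one.trans ht) (Real.rpow_nonneg (zero_le_one.trans ht) β)
    (Real.self_le_rpow_of_one_le ht hβ)

theorem eq_mul_self_of_tendsto_rpow_div (hψ_top : Tendsto ψ atTop atTop) {γ A A' : ℝ}
    (hγ : 0 < γ) (hA : Tendsto (fun t => ψ (t ^ γ) / ψ t) atTop (𝓝 A))
    (hA' : Tendsto (fun t => ψ (t ^ (γ * γ)) / ψ t) atTop (𝓝 A')) : A' = A * A := by
  have hprod := (hA.comp (tendsto_rpow_atTop hγ)).mul hA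
  refine tendsto_nhds_unique hA' (hprod.congr' ?_)
  filter_upwards [(tendsto_rpow_atTop hγ).eventually (hψ_top.eventually_gt_atTop 0),
    eventually_ge_atTop 0] with t hψt ht
  rw [Function.comp_apply, ← Real.rpow_mul ht, div_mul_div_cancel₀ hψt.ne']

/-- Along `βₙ = 2 ^ (2⁻ⁿ)` the limits of (2.1) satisfy `Aₙ = Aₙ₊₁²`, so `Aₙ = A₀ ^ (2⁻ⁿ) → 1`. -/
theorem exists_seq_tendsto_rpow_div_tendsto_one (hψ_mono : MonotoneOn ψ (Ici 0))
    (hψ_top : Tendsto ψ atTop atTop)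
    (h21 : ∀ α : ℝ, 1 < α → ∃ A : ℝ, Tendsto (fun t : ℝ => ψ (t ^ α) / ψ t) atTop (𝓝 A)) :
    ∃ β A : ℕ → ℝ, (∀ n, 1 < β n) ∧
      (∀ n, Tendsto (fun t => ψ (t ^ β n) / ψ t) atTop (𝓝 (A n))) ∧ Tendsto A atTop (𝓝 1) := by
  set β : ℕ → ℝ := fun n => (2 : ℝ) ^ ((1 / 2 : ℝ) ^ n)
  have hβ : ∀ n, 1 < β n := fun n => Real.one_lt_rpow (by norm_num) (by positivity)
  have hβ_sq : ∀ n, β (n + 1) * β (n + 1) = β n := fun n => by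
    simp only [β, ← Real.rpow_add two_pos, pow_succ]
    ring_nf
  choose A hA using fun n => h21 (β n) (hβ n)
  have hA_one : ∀ n, 1 ≤ A n := fun n =>
    one_le_of_tendsto_rpow_div hψ_mono hψ_top (hβ n).le (hA n)
  have hA_sq : ∀ n, A n = A (n + 1) * A (n + 1) := fun n =>
    eq_mul_self_of_tendsto_rpow_div hψ_top (one_pos.trans (hβ (n + 1))) (hA (n + 1))
      (by rw [hβ_sq]; exact hA n)
  have hA_eq : ∀ n, A n = A 0 ^ ((1 / 2 : ℝ) ^ n) := by
    intro n
    induction n with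
    | zero => simp
    | succ n ih =>
      rw [pow_succ, Real.rpow_mul (zero_le_one.trans (hA_one 0)), ← ih, hA_sq n,
        ← Real.sqrt_eq_rpow, Real.sqrt_mul_self (zero_le_one.trans (hA_one (n + 1)))]
  refine ⟨β, A, hβ, hA, ?_⟩
  have hlim := ((Real.continuousAt_const_rpow (zero_lt_one.trans_le (hA_one 0)).ne').tendsto.comp
    (tendsto_pow_atTop_nhds_zero_of_lt_one (by norm_num : (0 : ℝ) ≤ 1 / 2) (by norm_num)))
  rw [Real.rpow_zero] at hlim
  exact hlim.congr fun n => (hA_eq n).symm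

end RatioLimits

theorem ExpInvariant.map_div_eq_map_comp_div {ω : ExtendedLimit} (hω : ExpInvariant ω)
    {ψ F D : ℝ → ℝ} (hψ_mono : MonotoneOn ψ (Ici 0)) (hψ_top : Tendsto ψ atTop atTop)
    (h21 : ∀ α : ℝ, 1 < α → ∃ A : ℝ, Tendsto (fun t : ℝ => ψ (t ^ α) / ψ t) atTop (𝓝 A))
    (hF_mono : MonotoneOn F (Ici 0)) (hF_zero : F 0 = 0) (hD_nonneg : ∀ t, 0 ≤ D t)
    (hD_le : ∀ β : ℝ, 1 < β → ∀ᶠ t in atTop, D t ≤ t ^ β)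
    (hFD : ∃ C, ∀ᶠ t in atTop, F t ≤ F (D t) + C) (hf : BoundedNearInfty fun t => F t / ψ t) :
    ω.toFun (fun t => F t / ψ t) = ω.toFun (fun t => F (D t) / ψ t) := by
  have hψ_pos : ∀ᶠ t in atTop, 0 < ψ t := hψ_top.eventually_gt_atTop 0
  have hg_nonneg : ∀ᶠ t in atTop, 0 ≤ F (D t) / ψ t := by
    filter_upwards [hψ_pos] with t hψt
    exact div_nonneg (hF_zero ▸ hF_mono self_mem_Ici (hD_nonneg t) (hD_nonneg t)) hψt.le
  have hg_le : ∀ β : ℝ, 1 < β →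
      ∀ᶠ t in atTop, F (D t) / ψ t ≤ F (t ^ β) / ψ (t ^ β) * (ψ (t ^ β) / ψ t) := by
    intro β hβ
    filter_upwards [hD_le β hβ, hψ_pos, (tendsto_rpow_atTop (one_pos.trans hβ)).eventually hψ_pos]
      with t hDt hψt hψtβ
    rw [div_mul_div_cancel₀ hψtβ.ne']
    exact div_le_div_of_nonneg_right (hF_mono (hD_nonneg t) ((hD_nonneg t).trans hDt) hDt) hψt.le
  have hg : BoundedNearInfty fun t => F (D t) / ψ t := by
    obtain ⟨A, hA⟩ := h21 2 one_lt_two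
    exact (hf.comp_rpow_mul two_pos hA).of_nonneg_of_le hg_nonneg (hg_le 2 one_lt_two)
  apply le_antisymm
  · obtain ⟨C, hC⟩ := hFD
    refine ω.map_le_of_eventually_le_add hf hg (e := fun t => C / ψ t)
      (by simpa [div_eq_mul_inv] using hψ_top.inv_tendsto_atTop.const_mul C) ?_
    filter_upwards [hC, hψ_pos] with t hCt hψt
    rw [← add_div]
    exact div_le_div_of_nonneg_right hCt hψt.le
  · obtain ⟨β, A, hβ, hA, hA_one⟩ := exists_seq_tendsto_rpow_div_tendsto_one hψ_mono hψ_top h21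
    have hle : ∀ n, ω.toFun (fun t => F (D t) / ψ t) ≤ A n * ω.toFun (fun t => F t / ψ t) :=
      fun n => ExtendedLimit.map_le_mul_of_eventually_le_comp_rpow_mul hω (hβ n).le hf hg (hA n)
        (hg_le (β n) (hβ n))
    simpa using ge_of_tendsto' (hA_one.mul_const _) hle

section Superlevel

variable {H : ℝ → ℝ}

theorem volume_superlevel_le {q : ℝ} (hq : 0 < q)
    (hH : MemLp H (ENNReal.ofReal q) (volume.restrict (Ioi 0))) {t : ℝ} (ht : 0 < t) :
    volume {s | 0 < s ∧ 1 / t < H s} ≤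
      ENNReal.ofReal t ^ q * eLpNorm H (ENNReal.ofReal q) (volume.restrict (Ioi 0)) ^ q := by
  have hcheb := meas_ge_le_mul_pow_eLpNorm_enorm (volume.restrict (Ioi 0))
    (by simpa using hq) ENNReal.ofReal_ne_top hH.aestronglyMeasurable
    (ε := ENNReal.ofReal (1 / t)) (by simpa using ht) (by simp)
  rw [ENNReal.toReal_ofReal hq.le, ← ENNReal.ofReal_inv_of_pos (by positivity), one_div,
    inv_inv] at hcheb
  refine le_trans ?_ hcheb
  rw [Measure.restrict_apply' measurableSet_Ioi]
  refine measure_mono fun s ⟨hs, hHs⟩ => ⟨?_, hs⟩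
  rw [Set.mem_ofPred_eq, Real.enorm_eq_ofReal_abs, ← one_div]
  exact ENNReal.ofReal_le_ofReal (hHs.le.trans (le_abs_self _))

theorem volume_superlevel_ne_top {q : ℝ} (hq : 0 < q)
    (hH : MemLp H (ENNReal.ofReal q) (volume.restrict (Ioi 0))) {t : ℝ} (ht : 0 < t) :
    volume {s | 0 < s ∧ 1 / t < H s} ≠ ⊤ :=
  ne_top_of_le_ne_top
    (ENNReal.mul_ne_top (ENNReal.rpow_ne_top_of_nonneg hq.le ENNReal.ofReal_ne_top)
      (ENNReal.rpow_ne_top_of_nonneg hq.le hH.eLpNorm_ne_top))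
    (volume_superlevel_le hq hH ht)

theorem eventually_toReal_volume_superlevel_le_rpow {q β : ℝ} (hq : 0 < q) (hqβ : q < β)
    (hH : MemLp H (ENNReal.ofReal q) (volume.restrict (Ioi 0))) :
    ∀ᶠ t in atTop, (volume {s | 0 < s ∧ 1 / t < H s}).toReal ≤ t ^ β := by
  set C := (eLpNorm H (ENNReal.ofReal q) (volume.restrict (Ioi 0)) ^ q).toReal
  filter_upwards [(tendsto_rpow_atTop (sub_pos.2 hqβ)).eventually_ge_atTop C,
    eventually_gt_atTop 0] with t hCt ht
  calc (volume {s | 0 < s ∧ 1 / t < H s}).toReal ≤ t ^ q * C := by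
        refine ENNReal.toReal_le_of_le_ofReal (by positivity)
          ((volume_superlevel_le hq hH ht).trans_eq ?_)
        rw [ENNReal.ofReal_mul (by positivity), ENNReal.ofReal_rpow_of_pos ht,
          ENNReal.ofReal_toReal (ENNReal.rpow_ne_top_of_nonneg hq.le hH.eLpNorm_ne_top)]
    _ ≤ t ^ q * t ^ (β - q) := by gcongr
    _ = t ^ β := by rw [← Real.rpow_add ht, add_sub_cancel]

theorem intervalIntegrable_zero_of_memLp_Ioi {p : ℝ≥0∞} (hp : 1 ≤ p)
    (hH : MemLp H p (volume.restrict (Ioi 0))) {b : ℝ} (hb : 0 ≤ b) :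
    IntervalIntegrable H volume 0 b := by
  have hHb := hH.restrict (Ioc 0 b)
  rw [Measure.restrict_restrict_of_subset Ioc_subset_Ioi_self] at hHb
  exact (intervalIntegrable_iff_integrableOn_Ioc_of_le hb).2 (hHb.integrable hp)

theorem le_toReal_volume_superlevel (hH_anti : AntitoneOn H (Ioi 0)) {c s : ℝ}
    (hfin : volume {u | 0 < u ∧ c < H u} ≠ ⊤) (hs : 0 < s) (hcs : c < H s) :
    s ≤ (volume {u | 0 < u ∧ c < H u}).toReal := by
  have hsub : Ioc 0 s ⊆ {u | 0 < u ∧ c < H u} := fun u hu =>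
    ⟨hu.1, hcs.trans_le (hH_anti hu.1 hs hu.2)⟩
  simpa [Real.volume_real_Ioc_of_le hs.le, measureReal_def] using measureReal_mono hsub hfin

theorem integral_le_integral_toReal_volume_superlevel_add_one (hH_anti : AntitoneOn H (Ioi 0))
    (hH_nonneg : ∀ s, 0 ≤ H s) (hH_int : ∀ b, 0 ≤ b → IntervalIntegrable H volume 0 b)
    {t : ℝ} (ht : 0 < t) (hfin : volume {s | 0 < s ∧ 1 / t < H s} ≠ ⊤) :
    ∫ s in 0..t, H s ≤ (∫ s in 0..(volume {s | 0 < s ∧ 1 / t < H s}).toReal, H s) + 1 := by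
  set D := (volume {s | 0 < s ∧ 1 / t < H s}).toReal
  have hD : 0 ≤ D := ENNReal.toReal_nonneg
  rcases le_total t D with htD | hDt
  · have := intervalIntegral.integral_mono_interval le_rfl ht.le htD
      (ae_of_all _ hH_nonneg) (hH_int D hD)
    linarith
  have hsmall : ∀ s ∈ Ioo D t, H s ≤ 1 / t := fun s hs => not_lt.1 fun h =>
    (le_toReal_volume_superlevel hH_anti hfin (hD.trans_lt hs.1) h).not_gt hs.1
  have htail : ∫ s in D..t, H s ≤ 1 :=
    calc ∫ s in D..t, H s ≤ ∫ _ in D..t, 1 / t :=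
          intervalIntegral.integral_mono_on_of_le_Ioo hDt
            ((hH_int D hD).symm.trans (hH_int t ht.le)) intervalIntegrable_const hsmall
      _ = (t - D) / t := by simp [div_eq_mul_inv]
      _ ≤ 1 := (div_le_one ht).2 (by linarith)
  linarith [intervalIntegral.integral_interval_sub_left (hH_int t ht.le) (hH_int D hD)]

end Superlevel

theorem statement5_general
    (ψ : ℝ → ℝ)
    (hψ_mono : MonotoneOn ψ (Set.Ici 0))
    (hψ_top : Tendsto ψ atTop atTop)
    (h21 : ∀ α : ℝ, 1 < α →
      ∃ A : ℝ, Tendsto (fun t : ℝ => ψ (t ^ α) / ψ t) atTop (𝓝 A))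
    (δ : ℝ) (hδ : 0 < δ)
    (H : ℝ → ℝ)
    (hH_anti : AntitoneOn H (Set.Ioi 0))
    (hH_nonneg : ∀ s, 0 ≤ H s)
    (hH_Lq : ∀ q : ℝ, 1 < q → q < 1 + δ →
      MemLp H (ENNReal.ofReal q) (volume.restrict (Set.Ioi 0)))
    (hcH : ∃ M : ℝ, ∀ t : ℝ, 2 < t → (∫ s in (0:ℝ)..t, H s) / ψ t ≤ M) :
    ∀ ω : ExtendedLimit, ExpInvariant ω →
      ω.toFun (fun t : ℝ => (∫ s in (0:ℝ)..t, H s) / ψ t)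
        = ω.toFun (fun t : ℝ =>
            (∫ s in (0:ℝ)..((volume {s : ℝ | 0 < s ∧ 1/t < H s}).toReal), H s) / ψ t) := by
  intro ω hω
  obtain ⟨M, hM⟩ := hcH
  have hH_L : MemLp H (ENNReal.ofReal (1 + δ / 2)) (volume.restrict (Ioi 0)) :=
    hH_Lq _ (by linarith) (by linarith)
  have hH_int : ∀ b, 0 ≤ b → IntervalIntegrable H volume 0 b := fun b hb =>
    intervalIntegrable_zero_of_memLp_Ioi (by rw [ENNReal.one_le_ofReal]; linarith) hH_L hb
  have hF_mono : MonotoneOn (fun t => ∫ s in 0..t, H s) (Ici 0) := fun a ha b hb hab =>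
    intervalIntegral.integral_mono_interval le_rfl ha hab (ae_of_all _ hH_nonneg) (hH_int b hb)
  refine hω.map_div_eq_map_comp_div hψ_mono hψ_top h21 hF_mono intervalIntegral.integral_same
    (fun t => ENNReal.toReal_nonneg) (fun β hβ => ?_) ⟨1, ?_⟩ ⟨M, ?_⟩
  · obtain ⟨q, hq₁, hq⟩ := exists_between (lt_min hβ (by linarith : 1 < 1 + δ))
    exact eventually_toReal_volume_superlevel_le_rpow (by linarith) (lt_min_iff.1 hq).1
      (hH_Lq q hq₁ (lt_min_iff.1 hq).2)
  · filter_upwards [eventually_gt_atTop 0] with t ht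
    exact integral_le_integral_toReal_volume_superlevel_add_one hH_anti hH_nonneg hH_int ht
      (volume_superlevel_ne_top (by linarith) hH_L ht)
  · filter_upwards [hψ_top.eventually_gt_atTop 0, eventually_gt_atTop 2] with t hψt ht
    have hF_nonneg := hF_mono self_mem_Ici (zero_le_two.trans ht.le) (zero_le_two.trans ht.le)
    rw [abs_of_nonneg (div_nonneg (by simpa using hF_nonneg) hψt.le)]
    exact hM t ht

/-- (Proposition 2.8 (b).)  Let `ψ` be increasing, concave,
`ψ 0 = 0`, `ψ → ∞`, satisfying (2.1).  Let `H : (0,∞) → [0,∞)` be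
nonincreasing, in `L^q(0,∞)` for all `1 < q < 1+δ`, with
`sup_{t>2} (1/ψ t) ∫₀ᵗ H < ∞`.  With `D t` the Lebesgue measure of
`{s > 0 : H s > 1/t}` (i.e. `μ_H(1/t)`), every exponentiation invariant
extended limit `ω` satisfies
`ω (t ↦ (1/ψ t) ∫₀ᵗ H) = ω (t ↦ (1/ψ t) ∫₀^{D t} H)`. -/
theorem statement5
    (ψ : ℝ → ℝ)
    (hψ_mono : MonotoneOn ψ (Set.Ici 0))
    (hψ_conc : ConcaveOn ℝ (Set.Ici 0) ψ)
    (hψ_zero : ψ 0 = 0)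
    (hψ_top : Tendsto ψ atTop atTop)
    (h21 : ∀ α : ℝ, 1 < α →
      ∃ A : ℝ, Tendsto (fun t : ℝ => ψ (t ^ α) / ψ t) atTop (𝓝 A))
    (δ : ℝ) (hδ : 0 < δ)
    (H : ℝ → ℝ)
    (hH_anti : AntitoneOn H (Set.Ioi 0))
    (hH_nonneg : ∀ s, 0 ≤ H s)
    (hH_Lq : ∀ q : ℝ, 1 < q → q < 1 + δ →
      MemLp H (ENNReal.ofReal q) (volume.restrict (Set.Ioi 0)))
    (hcH : ∃ M : ℝ, ∀ t : ℝ, 2 < t → (∫ s in (0:ℝ)..t, H s) / ψ t ≤ M) :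
    ∀ ω : ExtendedLimit, ExpInvariant ω →
      ω.toFun (fun t : ℝ => (∫ s in (0:ℝ)..t, H s) / ψ t)
        = ω.toFun (fun t : ℝ =>
            (∫ s in (0:ℝ)..((volume {s : ℝ | 0 < s ∧ 1/t < H s}).toReal), H s) / ψ t) :=
  statement5_general ψ hψ_mono hψ_top h21 δ hδ H hH_anti hH_nonneg hH_Lq hcH
end

section
/- Let η be an extended limit on functions (0,∞) → ℝ, and define the functional ω by ω(f) := η( t ↦ f(e^{2^t}) ). Then ω is an extended limit, and ω is exponentiation invariant (i.e. ω(t ↦ f(t^α)) = ω(f) for all α ≥ 1 and all f bounded near ∞) if and only if η is translation invariant (i.e. η(t ↦ f(t+l)) = η(f) for all l > 0 and all f bounded near ∞). -/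
open MeasureTheory Filter Set Topology
open scoped ENNReal NNReal

/-- Translation invariance: `ω (t ↦ f (t + l)) = ω f` for all `l > 0`. -/
def TransInvariant (ω : ExtendedLimit) : Prop :=
  ∀ f : ℝ → ℝ, BoundedNearInfty f → ∀ l : ℝ, 0 < l →
    ω.toFun (fun t => f (t + l)) = ω.toFun f

noncomputable section Aux

private lemma two_rpow_tendsto : Tendsto (fun t : ℝ => (2:ℝ) ^ t) atTop atTop := by
  have h : ∀ t : ℝ, (2:ℝ) ^ t = Real.exp (Real.log 2 * t) := fun t => by
    rw [Real.rpow_def_of_pos (by norm_num)]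
  simp only [h]
  exact Real.tendsto_exp_atTop.comp
    ((tendsto_const_mul_atTop_of_pos (Real.log_pos (by norm_num))).mpr tendsto_id)

private lemma E_tendsto : Tendsto (fun t : ℝ => Real.exp ((2:ℝ) ^ t)) atTop atTop :=
  Real.tendsto_exp_atTop.comp two_rpow_tendsto

private lemma L_tendsto : Tendsto (fun s : ℝ => Real.logb 2 (Real.log s)) atTop atTop :=
  (Real.tendsto_logb_atTop (by norm_num)).comp Real.tendsto_log_atTop

private lemma bdd_comp {f e : ℝ → ℝ} (he : Tendsto e atTop atTop)
    (hf : BoundedNearInfty f) : BoundedNearInfty (fun t => f (e t)) := by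
  obtain ⟨M, hM⟩ := hf
  exact ⟨M, he.eventually hM⟩

end Aux

/-- (Equation (5.6) and the surrounding discussion.)  Given
an extended limit `η`, the functional `ω (f) := η (t ↦ f (e^{2^t}))` is again
an extended limit, and `ω` is exponentiation invariant if and only if `η` is
translation invariant. -/
theorem statement6 (η : ExtendedLimit) :
    ∃ ω : ExtendedLimit,
      (∀ f : ℝ → ℝ, ω.toFun f = η.toFun (fun t => f (Real.exp ((2:ℝ) ^ t))))
      ∧ (ExpInvariant ω ↔ TransInvariant η) := by
  set E : ℝ → ℝ := fun t => Real.exp ((2:ℝ) ^ t) with hE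
  refine ⟨⟨η.toFun.comp (LinearMap.funLeft ℝ ℝ E), ?_, ?_, ?_⟩, fun f => rfl, ?_, ?_⟩
  · exact η.map_one
  · intro f g hfg hf hg
    exact η.mono _ _ (E_tendsto.eventually hfg)
      (bdd_comp (f := f) E_tendsto hf) (bdd_comp (f := g) E_tendsto hg)
  · intro f hf
    exact η.vanish _ (hf.comp E_tendsto)
  · -- ExpInvariant ω → TransInvariant η
    intro hExp f hf l hl
    set h : ℝ → ℝ := fun s => f (Real.logb 2 (Real.log s)) with hh
    have hhb : BoundedNearInfty h := bdd_comp L_tendsto hf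
    have key := hExp h hhb ((2:ℝ) ^ l)
      (by
        rw [show (1:ℝ) = (2:ℝ) ^ (0:ℝ) by simp]
        exact Real.rpow_le_rpow_left_iff (by norm_num) |>.mpr hl.le)
    have e1 : (fun t => h (E t ^ ((2:ℝ) ^ l))) = fun t => f (t + l) := by
      funext t
      have h2t : (0:ℝ) < (2:ℝ) ^ t := Real.rpow_pos_of_pos (by norm_num) t
      simp only [hh, hE]
      rw [← Real.exp_mul, Real.log_exp,
        show (2:ℝ) ^ t * (2:ℝ) ^ l = (2:ℝ) ^ (t + l) by
          rw [Real.rpow_add (by norm_num)],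
        Real.logb_rpow (by norm_num) (by norm_num)]
    have e2 : (fun t => h (E t)) = f := by
      funext t
      simp only [hh, hE]
      rw [Real.log_exp, Real.logb_rpow (by norm_num) (by norm_num)]
    calc η.toFun (fun t => f (t + l))
        = η.toFun (fun t => h (E t ^ ((2:ℝ) ^ l))) := by rw [e1]
      _ = η.toFun (fun t => h (E t)) := key
      _ = η.toFun f := by rw [e2]
  · -- TransInvariant η → ExpInvariant ω
    intro hTrans f hf α hα
    rcases eq_or_lt_of_le hα with hα1 | hα1
    · subst hα1
      simp [Real.rpow_one]
    · set l : ℝ := Real.logb 2 α with hl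
      have hlpos : 0 < l := Real.logb_pos (by norm_num) hα1
      have hg : BoundedNearInfty (fun t => f (E t)) := bdd_comp E_tendsto hf
      have key := hTrans (fun t => f (E t)) hg l hlpos
      have e1 : (fun t => f (E (t + l))) = fun t => f (E t ^ α) := by
        funext t
        have h2t : (0:ℝ) < (2:ℝ) ^ t := Real.rpow_pos_of_pos (by norm_num) t
        simp only [hE]
        rw [← Real.exp_mul, Real.rpow_add (by norm_num : (0:ℝ) < 2), hl,
          Real.rpow_logb (by norm_num) (by norm_num) (by linarith)]
      calc η.toFun.comp (LinearMap.funLeft ℝ ℝ E) (fun t => f (t ^ α))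
          = η.toFun (fun t => f (E t ^ α)) := rfl
        _ = η.toFun (fun t => f (E (t + l))) := by rw [e1]
        _ = η.toFun (fun t => f (E t)) := key
        _ = η.toFun.comp (LinearMap.funLeft ℝ ℝ E) f := rfl
end

section
/- Let h : (0,∞) → ℝ be a bounded measurable function such that h(t+l) − h(t) → 0 as t → ∞ for every l > 0. Then there exist translation invariant extended limits η₁ and η₂ such that η₁(h) = liminf_{t→∞} h(t) and η₂(h) = limsup_{t→∞} h(t). -/
open MeasureTheory Filter Set Topology
open scoped ENNReal NNReal

/-!
For a function `f` bounded near `∞` let `p f` be the infimum, over all nonempty finite families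
of shifts, of the `limsup` of the average of the corresponding translates of `f`. Composing two
families of shifts shows that `p` is sublinear; taking the single shift `0` gives `p ≤ limsup`;
and averaging `f (· + l) - f` over the shifts `0, l, …, n l` telescopes, so `p` of it is `≤ 0`.
Hahn–Banach gives a linear `η ≤ p` with `η f = p f`; then `η ≤ limsup` makes `η` an extended
limit and `η ≤ p` makes it translation invariant. For `h ∈ E` every average of translates of `h`
differs from `h` by `o(1)`, so `p h = limsup h` and `p (-h) = -liminf h`.
-/

lemma Filter.Eventually.comp_add_const {p : ℝ → Prop} (h : ∀ᶠ t in atTop, p t) (c : ℝ) :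
    ∀ᶠ t in atTop, p (t + c) :=
  (tendsto_atTop_add_const_right atTop c tendsto_id).eventually h

namespace BoundedNearInfty

variable {f g : ℝ → ℝ}

lemma isBoundedUnder_le (hf : BoundedNearInfty f) : IsBoundedUnder (· ≤ ·) atTop f :=
  let ⟨_, hM⟩ := hf
  isBoundedUnder_of_eventually_le (hM.mono fun _ ht => (abs_le.1 ht).2)

lemma isBoundedUnder_ge (hf : BoundedNearInfty f) : IsBoundedUnder (· ≥ ·) atTop f :=
  let ⟨_, hM⟩ := hf
  isBoundedUnder_of_eventually_ge (hM.mono fun _ ht => (abs_le.1 ht).1)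

lemma isCoboundedUnder_le (hf : BoundedNearInfty f) : IsCoboundedUnder (· ≤ ·) atTop f :=
  hf.isBoundedUnder_ge.isCoboundedUnder_le

lemma of_tendsto {a : ℝ} (hf : Tendsto f atTop (𝓝 a)) : BoundedNearInfty f :=
  ⟨|a| + 1, (hf.eventually (Metric.ball_mem_nhds a one_pos)).mono fun t ht => by
    have := abs_sub_abs_le_abs_sub (f t) a
    rw [Real.dist_eq] at ht
    linarith⟩

lemma comp_add_const (hf : BoundedNearInfty f) (l : ℝ) : BoundedNearInfty (fun t => f (t + l)) :=
  let ⟨M, hM⟩ := hf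
  ⟨M, hM.comp_add_const l⟩

end BoundedNearInfty

def boundedNearInftySubmodule : Submodule ℝ (ℝ → ℝ) where
  carrier := {f | BoundedNearInfty f}
  add_mem' := by
    rintro f g ⟨Mf, hf⟩ ⟨Mg, hg⟩
    refine ⟨Mf + Mg, ?_⟩
    filter_upwards [hf, hg] with t hft hgt
    exact (abs_add_le _ _).trans (add_le_add hft hgt)
  zero_mem' := ⟨0, by simp⟩
  smul_mem' := by
    rintro c f ⟨M, hf⟩
    refine ⟨|c| * M, ?_⟩
    filter_upwards [hf] with t ht
    simpa [abs_mul] using mul_le_mul_of_nonneg_left ht (abs_nonneg c)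

@[simp]
lemma mem_boundedNearInftySubmodule {f : ℝ → ℝ} :
    f ∈ boundedNearInftySubmodule ↔ BoundedNearInfty f :=
  Iff.rfl

lemma BoundedNearInfty.add {f g : ℝ → ℝ} (hf : BoundedNearInfty f) (hg : BoundedNearInfty g) :
    BoundedNearInfty (f + g) :=
  boundedNearInftySubmodule.add_mem hf hg

lemma BoundedNearInfty.neg {f : ℝ → ℝ} (hf : BoundedNearInfty f) : BoundedNearInfty (-f) :=
  boundedNearInftySubmodule.neg_mem hf

lemma BoundedNearInfty.sub {f g : ℝ → ℝ} (hf : BoundedNearInfty f) (hg : BoundedNearInfty g) :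
    BoundedNearInfty (f - g) :=
  boundedNearInftySubmodule.sub_mem hf hg

lemma BoundedNearInfty.limsup_neg {f : ℝ → ℝ} (hf : BoundedNearInfty f) :
    limsup (-f) atTop = -liminf f atTop :=
  (Antitone.map_liminf_of_continuousAt (fun _ _ h => neg_le_neg h) f continuous_neg.continuousAt
    hf.isBoundedUnder_le.isCoboundedUnder_ge hf.isBoundedUnder_ge).symm

section ShiftAvg

variable {ι κ : Type*} [Fintype ι] [Fintype κ]

noncomputable def shiftAvg (l : ι → ℝ) (f : ℝ → ℝ) (t : ℝ) : ℝ :=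
  (∑ i, f (t + l i)) / Fintype.card ι

lemma shiftAvg_add (l : ι → ℝ) (f g : ℝ → ℝ) :
    shiftAvg l (f + g) = shiftAvg l f + shiftAvg l g := by
  ext t
  simp only [shiftAvg, Pi.add_apply, Finset.sum_add_distrib, add_div]

lemma shiftAvg_smul (l : ι → ℝ) (c : ℝ) (f : ℝ → ℝ) : shiftAvg l (c • f) = c • shiftAvg l f := by
  ext t
  simp only [shiftAvg, Pi.smul_apply, smul_eq_mul, ← Finset.mul_sum, mul_div_assoc]

lemma shiftAvg_const_zero (f : ℝ → ℝ) : shiftAvg (fun _ : Unit => (0 : ℝ)) f = f := by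
  ext t
  simp [shiftAvg]

lemma shiftAvg_comm (l₁ : ι → ℝ) (l₂ : κ → ℝ) (f : ℝ → ℝ) :
    shiftAvg l₁ (shiftAvg l₂ f) = shiftAvg l₂ (shiftAvg l₁ f) := by
  ext t
  simp only [shiftAvg, ← Finset.sum_div, div_div, mul_comm (Fintype.card ι : ℝ), add_right_comm]
  rw [Finset.sum_comm]

lemma shiftAvg_prod (l₁ : ι → ℝ) (l₂ : κ → ℝ) (f : ℝ → ℝ) :
    shiftAvg (fun p : ι × κ => l₁ p.1 + l₂ p.2) f = shiftAvg l₁ (shiftAvg l₂ f) := by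
  ext t
  simp only [shiftAvg, Fintype.sum_prod_type, Fintype.card_prod, ← Finset.sum_div, div_div,
    add_assoc, Nat.cast_mul, mul_comm (Fintype.card ι : ℝ)]

lemma BoundedNearInfty.shiftAvg {f : ℝ → ℝ} (hf : BoundedNearInfty f) (l : ι → ℝ) :
    BoundedNearInfty (_root_.shiftAvg l f) := by
  have : _root_.shiftAvg l f = (Fintype.card ι : ℝ)⁻¹ • ∑ i, fun t => f (t + l i) := by
    ext t
    simp [_root_.shiftAvg, div_eq_inv_mul]
  rw [← mem_boundedNearInftySubmodule, this]
  exact Submodule.smul_mem _ _ (Submodule.sum_mem _ fun i _ => hf.comp_add_const (l i))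

variable [Nonempty ι]

lemma eventually_shiftAvg_le {f : ℝ → ℝ} {b : ℝ} (hf : ∀ᶠ t in atTop, f t ≤ b) (l : ι → ℝ) :
    ∀ᶠ t in atTop, shiftAvg l f t ≤ b := by
  have hshift : ∀ᶠ t in atTop, ∀ i, f (t + l i) ≤ b :=
    eventually_all.2 fun i => hf.comp_add_const (l i)
  filter_upwards [hshift] with t ht
  rw [shiftAvg, div_le_iff₀ (by positivity)]
  simpa [mul_comm] using Finset.sum_le_sum fun i (_ : i ∈ Finset.univ) => ht i

lemma eventually_le_shiftAvg {f : ℝ → ℝ} {a : ℝ} (hf : ∀ᶠ t in atTop, a ≤ f t) (l : ι → ℝ) :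
    ∀ᶠ t in atTop, a ≤ shiftAvg l f t := by
  have hshift : ∀ᶠ t in atTop, ∀ i, a ≤ f (t + l i) :=
    eventually_all.2 fun i => hf.comp_add_const (l i)
  filter_upwards [hshift] with t ht
  rw [shiftAvg, le_div_iff₀ (by positivity)]
  simpa [mul_comm] using Finset.sum_le_sum fun i (_ : i ∈ Finset.univ) => ht i

lemma limsup_shiftAvg_le {f : ℝ → ℝ} (hf : BoundedNearInfty f) (l : ι → ℝ) :
    limsup (shiftAvg l f) atTop ≤ limsup f atTop := by
  refine le_of_forall_gt_imp_ge_of_dense fun b hb => ?_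
  exact limsup_le_of_le (hf.shiftAvg l).isCoboundedUnder_le
    (eventually_shiftAvg_le ((eventually_lt_of_limsup_lt hb hf.isBoundedUnder_le).mono
      fun _ => le_of_lt) l)

end ShiftAvg

def shiftAvgLimsups (f : ℝ → ℝ) : Set ℝ :=
  {x | ∃ (ι : Type) (_ : Fintype ι) (_ : Nonempty ι) (l : ι → ℝ),
    limsup (shiftAvg l f) atTop = x}

noncomputable def meanLimsup (f : ℝ → ℝ) : ℝ := sInf (shiftAvgLimsups f)

section MeanLimsup

variable {f g : ℝ → ℝ}

lemma limsup_shiftAvg_mem_shiftAvgLimsups {ι : Type} [Fintype ι] [Nonempty ι] (l : ι → ℝ)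
    (f : ℝ → ℝ) : limsup (shiftAvg l f) atTop ∈ shiftAvgLimsups f :=
  ⟨ι, _, ‹_›, l, rfl⟩

lemma limsup_mem_shiftAvgLimsups (f : ℝ → ℝ) : limsup f atTop ∈ shiftAvgLimsups f := by
  simpa only [shiftAvg_const_zero] using
    limsup_shiftAvg_mem_shiftAvgLimsups (fun _ : Unit => (0 : ℝ)) f

lemma bddBelow_shiftAvgLimsups (hf : BoundedNearInfty f) : BddBelow (shiftAvgLimsups f) := by
  obtain ⟨M, hM⟩ := id hf
  refine ⟨-M, ?_⟩
  rintro _ ⟨ι, _, _, l, rfl⟩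
  have hbelow := eventually_le_shiftAvg (hM.mono fun _ ht => (abs_le.1 ht).1) l
  exact le_limsup_of_frequently_le hbelow.frequently (hf.shiftAvg l).isBoundedUnder_le

lemma meanLimsup_le_limsup_shiftAvg (hf : BoundedNearInfty f) {ι : Type} [Fintype ι]
    [Nonempty ι] (l : ι → ℝ) : meanLimsup f ≤ limsup (shiftAvg l f) atTop :=
  csInf_le (bddBelow_shiftAvgLimsups hf) (limsup_shiftAvg_mem_shiftAvgLimsups l f)

lemma meanLimsup_le_limsup (hf : BoundedNearInfty f) : meanLimsup f ≤ limsup f atTop :=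
  csInf_le (bddBelow_shiftAvgLimsups hf) (limsup_mem_shiftAvgLimsups f)

lemma le_meanLimsup {a : ℝ} (h : ∀ (ι : Type) [Fintype ι] [Nonempty ι] (l : ι → ℝ),
    a ≤ limsup (shiftAvg l f) atTop) : a ≤ meanLimsup f :=
  le_csInf ⟨_, limsup_mem_shiftAvgLimsups f⟩ fun _ ⟨ι, _, _, l, hx⟩ => hx ▸ h ι l

lemma limsup_le_meanLimsup (hf : BoundedNearInfty f)
    (hshift : ∀ l, Tendsto (fun t => f (t + l) - f t) atTop (𝓝 0)) :
    limsup f atTop ≤ meanLimsup f := by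
  refine le_meanLimsup fun ι _ _ l => ?_
  have hsmall : Tendsto (f - shiftAvg l f) atTop (𝓝 0) := by
    have hsum := (tendsto_finsetSum Finset.univ fun i _ => hshift (l i)).div_const
      (Fintype.card ι : ℝ)
    refine (hsum.neg.congr fun t => ?_).trans_eq (by simp)
    simp [shiftAvg, Finset.sum_sub_distrib, sub_div]
  have hsplit : f = shiftAvg l f + (f - shiftAvg l f) := by abel
  calc limsup f atTop
      ≤ limsup (shiftAvg l f) atTop + limsup (f - shiftAvg l f) atTop := by
        conv_lhs => rw [hsplit]
        exact limsup_add_le (hf.shiftAvg l).isBoundedUnder_ge (hf.shiftAvg l).isBoundedUnder_le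
          hsmall.isCoboundedUnder_le hsmall.isBoundedUnder_le
    _ = limsup (shiftAvg l f) atTop := by rw [hsmall.limsup_eq, add_zero]

lemma meanLimsup_add_le (hf : BoundedNearInfty f) (hg : BoundedNearInfty g) :
    meanLimsup (f + g) ≤ meanLimsup f + meanLimsup g := by
  suffices h : ∀ (ι κ : Type) [Fintype ι] [Fintype κ] [Nonempty ι] [Nonempty κ]
      (l₁ : ι → ℝ) (l₂ : κ → ℝ),
      meanLimsup (f + g) ≤ limsup (shiftAvg l₁ f) atTop + limsup (shiftAvg l₂ g) atTop by
    have hf' : meanLimsup (f + g) - meanLimsup g ≤ meanLimsup f :=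
      le_meanLimsup fun ι _ _ l₁ => sub_le_comm.1 <| le_meanLimsup fun κ _ _ l₂ =>
        sub_le_iff_le_add'.2 (h ι κ l₁ l₂)
    linarith
  intro ι κ _ _ _ _ l₁ l₂
  have hf₁ := hf.shiftAvg l₁
  have hg₂ := hg.shiftAvg l₂
  -- one family of shifts serves both summands, since iterated averages commute
  have hsplit : shiftAvg (fun p : ι × κ => l₁ p.1 + l₂ p.2) (f + g)
      = shiftAvg l₂ (shiftAvg l₁ f) + shiftAvg l₁ (shiftAvg l₂ g) := by
    rw [shiftAvg_prod, shiftAvg_add, shiftAvg_add, shiftAvg_comm l₁ l₂ f]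
  calc meanLimsup (f + g)
      ≤ limsup (shiftAvg l₂ (shiftAvg l₁ f) + shiftAvg l₁ (shiftAvg l₂ g)) atTop :=
        hsplit ▸ meanLimsup_le_limsup_shiftAvg (hf.add hg) _
    _ ≤ limsup (shiftAvg l₂ (shiftAvg l₁ f)) atTop + limsup (shiftAvg l₁ (shiftAvg l₂ g)) atTop :=
        limsup_add_le (hf₁.shiftAvg l₂).isBoundedUnder_ge (hf₁.shiftAvg l₂).isBoundedUnder_le
          (hg₂.shiftAvg l₁).isCoboundedUnder_le (hg₂.shiftAvg l₁).isBoundedUnder_le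
    _ ≤ limsup (shiftAvg l₁ f) atTop + limsup (shiftAvg l₂ g) atTop :=
        add_le_add (limsup_shiftAvg_le hf₁ l₂) (limsup_shiftAvg_le hg₂ l₁)

lemma limsup_const_smul_of_nonneg (hf : BoundedNearInfty f) {c : ℝ} (hc : 0 ≤ c) :
    limsup (c • f) atTop = c * limsup f atTop :=
  ((monotone_mul_left_of_nonneg hc).map_limsup_of_continuousAt f
    (continuous_const_mul c).continuousAt hf.isBoundedUnder_le hf.isCoboundedUnder_le).symm

open scoped Pointwise in
lemma meanLimsup_smul (hf : BoundedNearInfty f) {c : ℝ} (hc : 0 ≤ c) :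
    meanLimsup (c • f) = c * meanLimsup f := by
  have hset : shiftAvgLimsups (c • f) = c • shiftAvgLimsups f := by
    ext x
    rw [Set.mem_smul_set]
    constructor
    · rintro ⟨ι, _, _, l, rfl⟩
      refine ⟨_, limsup_shiftAvg_mem_shiftAvgLimsups l f, ?_⟩
      rw [shiftAvg_smul, limsup_const_smul_of_nonneg (hf.shiftAvg l) hc, smul_eq_mul]
    · rintro ⟨_, ⟨ι, _, _, l, rfl⟩, rfl⟩
      refine ⟨ι, ‹_›, ‹_›, l, ?_⟩
      rw [shiftAvg_smul, limsup_const_smul_of_nonneg (hf.shiftAvg l) hc, smul_eq_mul]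
  rw [meanLimsup, hset, Real.sInf_smul_of_nonneg hc, smul_eq_mul, meanLimsup]

lemma meanLimsup_sub_comp_add_const_nonpos (hf : BoundedNearInfty f) (l : ℝ) :
    meanLimsup (fun t => f (t + l) - f t) ≤ 0 := by
  obtain ⟨M, hM⟩ := id hf
  have hd := (hf.comp_add_const l).sub hf
  -- averaging over the shifts `0, l, …, n l` telescopes to `(f (t + (n + 1) l) - f t) / (n + 1)`
  have key (n : ℕ) : meanLimsup (fun t => f (t + l) - f t) ≤ 2 * M / (n + 1) := by
    have htelescope (t : ℝ) : shiftAvg (fun i : Fin (n + 1) => (i : ℝ) * l)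
        (fun t => f (t + l) - f t) t = (f (t + (n + 1) * l) - f t) / (n + 1) := by
      have := Finset.sum_range_sub (fun i : ℕ => f (t + i * l)) (n + 1)
      simp only [Nat.cast_add, Nat.cast_one, Nat.cast_zero, zero_mul, add_zero] at this
      rw [shiftAvg, Fintype.card_fin, Nat.cast_add, Nat.cast_one,
        Fin.sum_univ_eq_sum_range (fun i : ℕ => f (t + i * l + l) - f (t + i * l)), ← this]
      congr 2
      funext i
      ring_nf
    have hbound : ∀ᶠ t in atTop, shiftAvg (fun i : Fin (n + 1) => (i : ℝ) * l)
        (fun t => f (t + l) - f t) t ≤ 2 * M / (n + 1) := by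
      filter_upwards [hM, hM.comp_add_const ((n + 1) * l)] with t ht hnt
      rw [htelescope, div_le_div_iff_of_pos_right (by positivity)]
      linarith [abs_le.1 ht, abs_le.1 hnt]
    exact (meanLimsup_le_limsup_shiftAvg hd _).trans
      (limsup_le_of_le (hd.shiftAvg _).isCoboundedUnder_le hbound)
  have hlim : Tendsto (fun n : ℕ => 2 * M / ((n : ℝ) + 1)) atTop (𝓝 0) := by
    simpa [Function.comp_def] using
      (tendsto_const_div_atTop_nhds_zero_nat (2 * M)).comp (tendsto_add_atTop_nat 1)
  exact ge_of_tendsto' hlim key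

end MeanLimsup

lemma tendsto_comp_add_const_sub {f : ℝ → ℝ}
    (hf : ∀ l, 0 < l → Tendsto (fun t => f (t + l) - f t) atTop (𝓝 0)) (l : ℝ) :
    Tendsto (fun t => f (t + l) - f t) atTop (𝓝 0) := by
  rcases lt_trichotomy l 0 with hl | rfl | hl
  · have := ((hf (-l) (neg_pos.2 hl)).comp (tendsto_atTop_add_const_right atTop l tendsto_id)).neg
    simpa [Function.comp_def] using this
  · simp
  · exact hf l hl

lemma meanLimsup_eq_limsup {f : ℝ → ℝ} (hf : BoundedNearInfty f)
    (hshift : ∀ l, Tendsto (fun t => f (t + l) - f t) atTop (𝓝 0)) :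
    meanLimsup f = limsup f atTop :=
  (meanLimsup_le_limsup hf).antisymm (limsup_le_meanLimsup hf hshift)

lemma exists_linearMap_le_sublinear_eq {E : Type*} [AddCommGroup E] [Module ℝ E] (N : E → ℝ)
    (N_hom : ∀ c : ℝ, 0 < c → ∀ x, N (c • x) = c * N x) (N_add : ∀ x y, N (x + y) ≤ N x + N y)
    (x : E) : ∃ φ : E →ₗ[ℝ] ℝ, (∀ y, φ y ≤ N y) ∧ φ x = N x := by
  have N_zero : N 0 = 0 := by
    have := N_hom 2 two_pos 0
    rw [smul_zero] at this
    linarith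
  have N_smul_ge (c : ℝ) : c * N x ≤ N (c • x) := by
    rcases lt_trichotomy c 0 with hc | rfl | hc
    · have := N_add (c • x) ((-c) • x)
      rw [← add_smul, add_neg_cancel, zero_smul, N_zero, N_hom _ (neg_pos.2 hc)] at this
      linarith
    · simp [N_zero]
    · exact (N_hom c hc x).ge
  have hspan (c : ℝ) (hc : c • x = 0) : c • N x = 0 := by
    rcases smul_eq_zero.1 hc with rfl | rfl
    · exact zero_smul _ _
    · rw [N_zero, smul_zero]
  obtain ⟨φ, hφx, hφN⟩ := exists_extension_of_le_sublinear
    (LinearPMap.mkSpanSingleton' x (N x) hspan) N N_hom N_add <| by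
      rintro ⟨y, hy⟩
      obtain ⟨c, rfl⟩ := Submodule.mem_span_singleton.1 hy
      rw [LinearPMap.mkSpanSingleton'_apply]
      exact N_smul_ge c
  exact ⟨φ, hφN, (hφx ⟨x, Submodule.mem_span_singleton_self x⟩).trans
    (LinearPMap.mkSpanSingleton'_apply_self _ _ _ _)⟩

lemma LinearMap.apply_eq_of_tendsto_of_le_limsup (L : (ℝ → ℝ) →ₗ[ℝ] ℝ)
    (hL : ∀ f, BoundedNearInfty f → L f ≤ limsup f atTop) {f : ℝ → ℝ} {a : ℝ}
    (hf : Tendsto f atTop (𝓝 a)) : L f = a := by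
  have hbdd := BoundedNearInfty.of_tendsto hf
  have h₁ := (hL f hbdd).trans_eq hf.limsup_eq
  have h₂ := (hL (-f) hbdd.neg).trans_eq hf.neg.limsup_eq
  rw [map_neg] at h₂
  linarith

def ExtendedLimit.ofLELimsup (L : (ℝ → ℝ) →ₗ[ℝ] ℝ)
    (hL : ∀ f, BoundedNearInfty f → L f ≤ limsup f atTop) : ExtendedLimit where
  toFun := L
  map_one := L.apply_eq_of_tendsto_of_le_limsup hL tendsto_const_nhds
  mono f g hfg hf hg := by
    have hfg' : BoundedNearInfty (f - g) := BoundedNearInfty.sub hf hg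
    have := (hL _ hfg').trans <|
      limsup_le_of_le hfg'.isCoboundedUnder_le (hfg.mono fun _ => sub_nonpos.2)
    rw [map_sub] at this
    linarith
  vanish _ hf := L.apply_eq_of_tendsto_of_le_limsup hL hf

lemma ExtendedLimit.transInvariant_of_le_meanLimsup (η : ExtendedLimit)
    (hη : ∀ f, BoundedNearInfty f → η.toFun f ≤ meanLimsup f) : TransInvariant η := by
  intro f hf l _
  have h₁ := (hη _ ((hf.comp_add_const l).sub hf)).trans (meanLimsup_sub_comp_add_const_nonpos hf l)
  have h₂ := (hη _ ((hf.neg.comp_add_const l).sub hf.neg)).trans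
    (meanLimsup_sub_comp_add_const_nonpos hf.neg l)
  have hneg : (fun t => (-f) (t + l)) = -fun t => f (t + l) := rfl
  rw [map_sub] at h₁ h₂
  rw [hneg, map_neg, map_neg] at h₂
  linarith

theorem exists_transInvariant_apply_eq_meanLimsup {f : ℝ → ℝ} (hf : BoundedNearInfty f) :
    ∃ η : ExtendedLimit, TransInvariant η ∧ η.toFun f = meanLimsup f := by
  obtain ⟨φ, hφN, hφf⟩ := exists_linearMap_le_sublinear_eq
    (fun g : boundedNearInftySubmodule => meanLimsup g)
    (fun _ hc g => by rw [Submodule.coe_smul]; exact meanLimsup_smul g.2 hc.le)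
    (fun g₁ g₂ => by rw [Submodule.coe_add]; exact meanLimsup_add_le g₁.2 g₂.2) ⟨f, hf⟩
  obtain ⟨L, hL⟩ := LinearMap.exists_extend φ
  have hLφ (g : ℝ → ℝ) (hg : BoundedNearInfty g) : L g = φ ⟨g, hg⟩ :=
    LinearMap.congr_fun hL ⟨g, hg⟩
  have hLN (g : ℝ → ℝ) (hg : BoundedNearInfty g) : L g ≤ meanLimsup g :=
    (hLφ g hg).trans_le (hφN ⟨g, hg⟩)
  let η := ExtendedLimit.ofLELimsup L fun g hg => (hLN g hg).trans (meanLimsup_le_limsup hg)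
  exact ⟨η, η.transInvariant_of_le_meanLimsup hLN, (hLφ f hf).trans hφf⟩

theorem statement10_general
    (h : ℝ → ℝ)
    (hbdd : ∃ M : ℝ, ∀ t : ℝ, |h t| ≤ M)
    (hE : ∀ l : ℝ, 0 < l →
      Tendsto (fun t : ℝ => h (t + l) - h t) atTop (𝓝 (0:ℝ))) :
    ∃ η₁ η₂ : ExtendedLimit, TransInvariant η₁ ∧ TransInvariant η₂ ∧
      η₁.toFun h = Filter.liminf h Filter.atTop ∧
      η₂.toFun h = Filter.limsup h Filter.atTop := by
  have hb : BoundedNearInfty h := let ⟨M, hM⟩ := hbdd; ⟨M, Eventually.of_forall hM⟩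
  have hshift := tendsto_comp_add_const_sub hE
  have hshift_neg (l : ℝ) : Tendsto (fun t => (-h) (t + l) - (-h) t) atTop (𝓝 0) := by
    simpa [neg_add_eq_sub] using (hshift l).neg
  obtain ⟨η₁, hη₁, hη₁h⟩ := exists_transInvariant_apply_eq_meanLimsup hb.neg
  obtain ⟨η₂, hη₂, hη₂h⟩ := exists_transInvariant_apply_eq_meanLimsup hb
  refine ⟨η₁, η₂, hη₁, hη₂, ?_, hη₂h.trans (meanLimsup_eq_limsup hb hshift)⟩
  rw [map_neg, meanLimsup_eq_limsup hb.neg hshift_neg, hb.limsup_neg] at hη₁h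
  exact neg_inj.1 hη₁h

/-- (Proposition 5.5.)  For every bounded measurable
`h : (0,∞) → ℝ` with `h(t+l) - h(t) → 0` at `∞` for every `l > 0` (i.e.
`h ∈ E`), there are translation invariant extended limits `η₁, η₂` with
`η₁ h = liminf_{t→∞} h` and `η₂ h = limsup_{t→∞} h`. -/
theorem statement10
    (h : ℝ → ℝ) (hmeas : Measurable h)
    (hbdd : ∃ M : ℝ, ∀ t : ℝ, |h t| ≤ M)
    (hE : ∀ l : ℝ, 0 < l →
      Tendsto (fun t : ℝ => h (t + l) - h t) atTop (𝓝 (0:ℝ))) :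
    ∃ η₁ η₂ : ExtendedLimit, TransInvariant η₁ ∧ TransInvariant η₂ ∧
      η₁.toFun h = Filter.liminf h Filter.atTop ∧
      η₂.toFun h = Filter.limsup h Filter.atTop :=
  statement10_general h hbdd hE
end
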